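/- Let A = {(x₁,x₂,x₃) ∈ ℍ¹ : x₁² + x₂² = 1} be the right circular cylinder over the unit circle, and let ℋ³_H be the 3-dimensional Hausdorff measure built from the Korányi metric d_H. Then the restriction of ℋ³_H to A is uniformly distributed on (ℍ¹, d_H): ℋ³_H(B(x,r) ∩ A) = ℋ³_H(B(y,r) ∩ A) for all x, y ∈ A and all r > 0. -/

import Mathlib

open MeasureTheory Set ENNReal Real

noncomputable section

/-- The first Heisenberg group `ℍ¹`, identified with `ℝ³`. -/
abbrev H1 := ℝ × ℝ × ℝ

/-- The group law of `ℍ¹`: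
`x·y = (x₁+y₁, x₂+y₂, x₃+y₃ - 2(x₁y₂ - x₂y₁))`. -/
def hmul1 (x y : H1) : H1 :=
  (x.1 + y.1, x.2.1 + y.2.1, x.2.2 + y.2.2 - 2 * (x.1 * y.2.1 - x.2.1 * y.1))

/-- The group inverse of `ℍ¹`, `x⁻¹ = -x`. -/
def hinv1 (x : H1) : H1 := (-x.1, -x.2.1, -x.2.2)

/-- The Korányi norm `‖x‖_H = ((x₁²+x₂²)² + x₃²)^{1/4}`. -/
def KNorm1 (x : H1) : ℝ := ((x.1 ^ 2 + x.2.1 ^ 2) ^ 2 + x.2.2 ^ 2) ^ ((1 : ℝ) / 4)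

/-- The Korányi metric `d_H(x,y) = ‖x⁻¹·y‖_H` on `ℍ¹`. -/
def dH1 (x y : H1) : ℝ := KNorm1 (hmul1 (hinv1 x) y)

/-- The closed `d_H`-ball of center `x` and radius `r`. -/
def ball1 (x : H1) (r : ℝ) : Set H1 := {y | dH1 x y ≤ r}

/-- `d_H`-diameter of a set, as an extended real. -/
def ediam1 (E : Set H1) : ℝ≥0∞ := ⨆ x ∈ E, ⨆ y ∈ E, ENNReal.ofReal (dH1 x y)

/-- The `s`-dimensional Hausdorff measure built from the Korányi metric `d_H` on `ℍ¹`. -/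
def haus1 (s : ℝ) (E : Set H1) : ℝ≥0∞ :=
  ⨆ (δ : ℝ) (_ : 0 < δ), ⨅ (t : ℕ → Set H1) (_ : E ⊆ ⋃ i, t i)
    (_ : ∀ i, ediam1 (t i) ≤ ENNReal.ofReal δ), ∑' i, ediam1 (t i) ^ s


/-!
Rotations about the `x₃`-axis composed with vertical translations are `d_H`-isometries that
preserve the cylinder and act transitively on it. An isometry preserves `ℋ^s_H`, and one mapping
`x` to `y` carries `B(x,r) ∩ A` onto `B(y,r) ∩ A`.
-/

lemma ediam1_image_le_of_isometry {f : H1 → H1} (hf : ∀ a b, dH1 (f a) (f b) = dH1 a b)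
    (S : Set H1) : ediam1 (f '' S) ≤ ediam1 S := by
  refine iSup₂_le fun _ ⟨a, ha, hfa⟩ => iSup₂_le fun _ ⟨b, hb, hfb⟩ => ?_
  subst hfa hfb
  rw [hf]
  exact le_iSup₂_of_le a ha
    (le_iSup₂_of_le (f := fun y _ => ENNReal.ofReal (dH1 a y)) b hb le_rfl)

lemma ediam1_preimage_le_of_isometry {f : H1 → H1} (hf : ∀ a b, dH1 (f a) (f b) = dH1 a b)
    (S : Set H1) : ediam1 (f ⁻¹' S) ≤ ediam1 S := by
  refine iSup₂_le fun a ha => iSup₂_le fun b hb => ?_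
  rw [← hf]
  exact le_iSup₂_of_le (f a) ha
    (le_iSup₂_of_le (f := fun y _ => ENNReal.ofReal (dH1 (f a) y)) (f b) hb le_rfl)

lemma haus1_le_of_forall_cover {s : ℝ} (hs : 0 ≤ s) {E F : Set H1}
    (h : ∀ u : ℕ → Set H1, F ⊆ ⋃ i, u i →
      ∃ t : ℕ → Set H1, E ⊆ ⋃ i, t i ∧ ∀ i, ediam1 (t i) ≤ ediam1 (u i)) :
    haus1 s E ≤ haus1 s F := by
  refine iSup₂_mono fun δ _ => le_iInf₂ fun u hu => le_iInf fun hδ => ?_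
  obtain ⟨t, ht, htu⟩ := h u hu
  exact iInf₂_le_of_le t ht <| iInf_le_of_le (fun i => (htu i).trans (hδ i)) <|
    ENNReal.tsum_le_tsum fun i => ENNReal.rpow_le_rpow (htu i) hs

lemma haus1_image_of_isometry {f : H1 → H1} (hf : ∀ a b, dH1 (f a) (f b) = dH1 a b)
    {s : ℝ} (hs : 0 ≤ s) (E : Set H1) : haus1 s (f '' E) = haus1 s E := by
  apply le_antisymm
  · refine haus1_le_of_forall_cover hs fun t ht => ⟨fun i => f '' t i, ?_, fun i => ?_⟩
    · rw [← Set.image_iUnion]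
      exact Set.image_mono ht
    · exact ediam1_image_le_of_isometry hf _
  · refine haus1_le_of_forall_cover hs fun u hu => ⟨fun i => f ⁻¹' u i, ?_, fun i => ?_⟩
    · rw [← Set.preimage_iUnion, ← Set.image_subset_iff]
      exact hu
    · exact ediam1_preimage_le_of_isometry hf _

/-- Rotation about the `x₃`-axis by the angle with cosine `c` and sine `s`, then vertical
translation by `t`. -/
def rotTrans (c s t : ℝ) (a : H1) : H1 :=
  (c * a.1 - s * a.2.1, s * a.1 + c * a.2.1, a.2.2 + t)

section rotTrans

variable {c s : ℝ} (t : ℝ) (h : c ^ 2 + s ^ 2 = 1)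
include h

lemma rotTrans_neg_rotTrans (a : H1) : rotTrans c (-s) (-t) (rotTrans c s t a) = a := by
  obtain ⟨a₁, a₂, a₃⟩ := a
  simp only [rotTrans, Prod.mk.injEq]
  exact ⟨by linear_combination a₁ * h, by linear_combination a₂ * h, by ring⟩

lemma rotTrans_rotTrans_neg (a : H1) : rotTrans c s t (rotTrans c (-s) (-t) a) = a := by
  simpa using rotTrans_neg_rotTrans (-t) (s := -s) (by rwa [neg_sq]) a

lemma dH1_rotTrans (a b : H1) : dH1 (rotTrans c s t a) (rotTrans c s t b) = dH1 a b := by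
  obtain ⟨a₁, a₂, a₃⟩ := a
  obtain ⟨b₁, b₂, b₃⟩ := b
  simp only [dH1, rotTrans, hmul1, hinv1, KNorm1]
  congr 1
  linear_combination ((c ^ 2 + s ^ 2 + 1) * ((b₁ - a₁) ^ 2 + (b₂ - a₂) ^ 2) ^ 2
    + 4 * (a₁ * b₂ - a₂ * b₁) * (b₃ - a₃)
    + 4 * (c ^ 2 + s ^ 2 + 1) * (a₁ * b₂ - a₂ * b₁) ^ 2) * h

lemma rotTrans_sq_add_sq (a : H1) :
    (rotTrans c s t a).1 ^ 2 + (rotTrans c s t a).2.1 ^ 2 = a.1 ^ 2 + a.2.1 ^ 2 := by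
  simp only [rotTrans]
  linear_combination (a.1 ^ 2 + a.2.1 ^ 2) * h

lemma image_rotTrans_ball1_inter_cylinder (x : H1) (r : ℝ) :
    rotTrans c s t '' (ball1 x r ∩ {p : H1 | p.1 ^ 2 + p.2.1 ^ 2 = 1}) =
      ball1 (rotTrans c s t x) r ∩ {p : H1 | p.1 ^ 2 + p.2.1 ^ 2 = 1} := by
  rw [Set.image_eq_preimage_of_inverse (rotTrans_neg_rotTrans t h) (rotTrans_rotTrans_neg t h)]
  ext z
  simp only [ball1, Set.mem_preimage, Set.mem_inter_iff, Set.mem_ofPred_eq]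
  rw [← dH1_rotTrans t h, rotTrans_rotTrans_neg t h, ← rotTrans_sq_add_sq t h,
    rotTrans_rotTrans_neg t h]

end rotTrans

lemma exists_rotTrans_eq {x y : H1} (hx : x.1 ^ 2 + x.2.1 ^ 2 = 1)
    (hy : y.1 ^ 2 + y.2.1 ^ 2 = 1) :
    ∃ c s t : ℝ, c ^ 2 + s ^ 2 = 1 ∧ rotTrans c s t x = y := by
  obtain ⟨x₁, x₂, x₃⟩ := x
  obtain ⟨y₁, y₂, y₃⟩ := y
  refine ⟨x₁ * y₁ + x₂ * y₂, x₁ * y₂ - x₂ * y₁, y₃ - x₃,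
    by linear_combination (y₁ ^ 2 + y₂ ^ 2) * hx + hy, ?_⟩
  simp only [rotTrans, Prod.mk.injEq]
  exact ⟨by linear_combination y₁ * hx, by linear_combination y₂ * hx, by ring⟩

/-- The restriction of the 3-dimensional Korányi Hausdorff measure to the right circular
cylinder `{x₁² + x₂² = 1} ⊆ ℍ¹` is uniformly distributed on `(ℍ¹, d_H)`. -/
theorem statement19 :
    ∀ x ∈ {p : H1 | p.1 ^ 2 + p.2.1 ^ 2 = 1},
      ∀ y ∈ {p : H1 | p.1 ^ 2 + p.2.1 ^ 2 = 1},
        ∀ r : ℝ, 0 < r →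
          haus1 3 (ball1 x r ∩ {p : H1 | p.1 ^ 2 + p.2.1 ^ 2 = 1}) =
          haus1 3 (ball1 y r ∩ {p : H1 | p.1 ^ 2 + p.2.1 ^ 2 = 1}) := by
  intro x hx y hy r _
  obtain ⟨c, s, t, hcs, rfl⟩ := exists_rotTrans_eq hx hy
  rw [← image_rotTrans_ball1_inter_cylinder t hcs,
    haus1_image_of_isometry (dH1_rotTrans t hcs) (by norm_num)]
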